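/- arXiv:2208.04812 — 2 statements merged into one kernel-verified Lean document; each statement's English description precedes it below -/
import Mathlib

section
/- Let T be a closable linear operator on a complex Hilbert space H such that T^n is densely defined, and let p be a complex polynomial of degree n. If the spectrum of p(T) is not all of ℂ, then the adjoint of p(T) equals p̄(T*), where p̄ is the polynomial with conjugated coefficients. -/
open LinearPMap

set_option linter.unusedSectionVars false

noncomputable section

section BanachDefs

variable {H : Type*} [NormedAddCommGroup H] [NormedSpace ℂ H]

/-- Composition `g ∘ f` of unbounded operators, with the natural (maximal) domain
`{x ∈ dom f : f x ∈ dom g}`. -/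
def LinearPMap.pComp (g f : H →ₗ.[ℂ] H) : H →ₗ.[ℂ] H where
  domain := (g.domain.comap f.toFun).map f.domain.subtype
  toFun := g.toFun ∘ₗ (f.toFun.restrict (p := g.domain.comap f.toFun) (q := g.domain)
      (fun _ hx => hx)) ∘ₗ
    ((Submodule.equivMapOfInjective f.domain.subtype (Submodule.injective_subtype _)
      (g.domain.comap f.toFun)).symm).toLinearMap

/-- `n`-th power of an unbounded operator; `T^0` is the identity on all of `H`. -/
def LinearPMap.pPow (T : H →ₗ.[ℂ] H) : ℕ → (H →ₗ.[ℂ] H)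
  | 0 => (LinearMap.id : H →ₗ[ℂ] H).toPMap ⊤
  | n + 1 => T.pComp (T.pPow n)

theorem LinearPMap.pPow_domain_succ_le (T : H →ₗ.[ℂ] H) (n : ℕ) :
    (T.pPow (n + 1)).domain ≤ (T.pPow n).domain := by
  intro x hx
  simp_rw [pPow, pComp] at hx
  obtain ⟨y, -, rfl⟩ := hx
  exact y.2

theorem LinearPMap.pPow_domain_le (T : H →ₗ.[ℂ] H) {i n : ℕ} (h : i ≤ n) :
    (T.pPow n).domain ≤ (T.pPow i).domain := by
  induction n with
  | zero => exact Nat.le_zero.mp h ▸ le_rfl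
  | succ n ih =>
    rcases Nat.lt_succ_iff_lt_or_eq.mp (Nat.lt_succ_of_le h) with h' | rfl
    · exact le_trans (T.pPow_domain_succ_le n) (ih (Nat.lt_succ_iff.mp h'))
    · exact le_rfl

/-- `p(T)` for a complex polynomial `p`, defined on `D(T^n)` where `n = deg p`. -/
def LinearPMap.polyApp (p : Polynomial ℂ) (T : H →ₗ.[ℂ] H) : H →ₗ.[ℂ] H where
  domain := (T.pPow p.natDegree).domain
  toFun := ∑ i ∈ (Finset.range (p.natDegree + 1)).attach,
    p.coeff i.1 • ((T.pPow i.1).toFun ∘ₗ Submodule.inclusion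
      (T.pPow_domain_le (Nat.lt_succ_iff.mp (Finset.mem_range.mp i.2))))

/-- `A - μ • I` with domain `dom A`. -/
def LinearPMap.subConst (A : H →ₗ.[ℂ] H) (μ : ℂ) : H →ₗ.[ℂ] H :=
  ⟨A.domain, A.toFun - μ • A.domain.subtype⟩

/-- An unbounded operator is boundedly invertible if it is bijective from its domain onto `H`
with an everywhere-defined bounded (continuous) inverse. -/
def LinearPMap.IsBddInvertible (A : H →ₗ.[ℂ] H) : Prop :=
  ∃ B : H →L[ℂ] H, (∀ y : H, ∃ hy : B y ∈ A.domain, A ⟨B y, hy⟩ = y) ∧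
    ∀ x : A.domain, B (A x) = (x : H)

/-- The spectrum of an unbounded operator: `μ ∉ σ(A)` iff `A - μI` is bijective with a
bounded everywhere-defined inverse. -/
def LinearPMap.pSpectrum (A : H →ₗ.[ℂ] H) : Set ℂ :=
  {μ | ¬ (A.subConst μ).IsBddInvertible}

/-- The kernel of an unbounded operator, as a subset of `H`. -/
def LinearPMap.pKer (A : H →ₗ.[ℂ] H) : Set H :=
  {x | ∃ hx : x ∈ A.domain, A ⟨x, hx⟩ = 0}

/-- The range of an unbounded operator. -/
def LinearPMap.pRan (A : H →ₗ.[ℂ] H) : Set H :=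
  Set.range fun x : A.domain => A x

/-- A bounded everywhere-defined operator seen as an unbounded operator. -/
def ContinuousLinearMap.toPMapTop (B : H →L[ℂ] H) : H →ₗ.[ℂ] H :=
  (B : H →ₗ[ℂ] H).toPMap ⊤

end BanachDefs

section HilbertDefs

variable {H : Type*} [NormedAddCommGroup H] [InnerProductSpace ℂ H] [CompleteSpace H]

/-- A densely defined closed operator is quasinormal if `T T* T = T* T T`. -/
def LinearPMap.IsQuasinormal (T : H →ₗ.[ℂ] H) : Prop :=
  T.IsClosed ∧ Dense (T.domain : Set H) ∧
    T.pComp (T.adjoint.pComp T) = T.adjoint.pComp (T.pComp T)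

/-- A densely defined closed operator is normal if `T* T = T T*` (an equality of unbounded
operators, domains included). -/
def LinearPMap.IsNormal (T : H →ₗ.[ℂ] H) : Prop :=
  T.IsClosed ∧ Dense (T.domain : Set H) ∧ T.adjoint.pComp T = T.pComp T.adjoint

/-- A symmetric (not necessarily densely defined) operator. -/
def LinearPMap.IsSymm (T : H →ₗ.[ℂ] H) : Prop :=
  ∀ x y : T.domain, inner ℂ (T x) (y : H) = (inner ℂ (x : H) (T y) : ℂ)

/-- A paranormal operator: `‖Tx‖² ≤ ‖T²x‖ ‖x‖` for every `x ∈ D(T²)`. -/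
def LinearPMap.IsParanormal (T : H →ₗ.[ℂ] H) : Prop :=
  ∀ (x : H) (hx : x ∈ T.domain) (hTx : T ⟨x, hx⟩ ∈ T.domain),
    ‖T ⟨x, hx⟩‖ ^ 2 ≤ ‖T ⟨T ⟨x, hx⟩, hTx⟩‖ * ‖x‖

end HilbertDefs

end

/-!
The inclusion `p̄(T*) ⊆ p(T)*` always holds, so the point is `D(p(T)*) ⊆ D(T*ⁿ)`. Pick
`μ ∉ σ(p(T))` and let `B = (p(T) - μ)⁻¹`. Since `p(T) - μ` is a polynomial in `T` of degree
`n ≥ 1`, `B` maps `D(T)` into `D(Tⁿ⁺¹)` and commutes with `T` there. As `T` is closable, the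
closed graph theorem makes each `Tʲ B` (`j ≤ n`) bounded, and `(Tʲ B) T ⊆ Tʲ⁺¹ B` gives
inductively `T*ʲ B* = (Tʲ B)*`, so `B*` maps `H` into `D(T*ⁿ)`. Finally every
`v ∈ D(p(T)*)` equals `B* (p(T)* v - μ̄ v)`.
-/

namespace LinearPMap

section Powers

variable {H : Type*} [NormedAddCommGroup H] [NormedSpace ℂ H]

theorem mem_pComp_domain {g f : H →ₗ.[ℂ] H} {x : H} :
    x ∈ (g.pComp f).domain ↔ ∃ hx : x ∈ f.domain, f ⟨x, hx⟩ ∈ g.domain :=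
  ⟨fun ⟨y, hy, hyx⟩ => hyx ▸ ⟨y.2, hy⟩, fun ⟨hx, hfx⟩ => ⟨⟨x, hx⟩, hfx, rfl⟩⟩

theorem pComp_apply {g f : H →ₗ.[ℂ] H} {x : H} (hx : x ∈ f.domain)
    (hfx : f ⟨x, hx⟩ ∈ g.domain) (hc : x ∈ (g.pComp f).domain) :
    g.pComp f ⟨x, hc⟩ = g ⟨f ⟨x, hx⟩, hfx⟩ := by
  have hpre : (Submodule.equivMapOfInjective f.domain.subtype (Submodule.injective_subtype _)
      (g.domain.comap f.toFun)).symm ⟨x, hc⟩ = ⟨⟨x, hx⟩, hfx⟩ := by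
    rw [LinearEquiv.symm_apply_eq]
    rfl
  change g.toFun _ = _
  congr 1
  exact congrArg (f.toFun.restrict (p := g.domain.comap f.toFun) (q := g.domain)
    fun _ hx => hx) hpre

variable {T : H →ₗ.[ℂ] H} {n : ℕ} {x : H}

theorem mem_pPow_succ_domain :
    x ∈ (T.pPow (n + 1)).domain ↔ ∃ hx : x ∈ (T.pPow n).domain, T.pPow n ⟨x, hx⟩ ∈ T.domain :=
  mem_pComp_domain

theorem pPow_succ_apply (hx : x ∈ (T.pPow n).domain) (hTx : T.pPow n ⟨x, hx⟩ ∈ T.domain)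
    (hc : x ∈ (T.pPow (n + 1)).domain) :
    T.pPow (n + 1) ⟨x, hc⟩ = T ⟨T.pPow n ⟨x, hx⟩, hTx⟩ :=
  pComp_apply hx hTx hc

theorem pPow_one_domain : (T.pPow 1).domain = T.domain := by
  ext x
  exact ⟨fun h => (mem_pPow_succ_domain.mp h).2,
    fun h => mem_pPow_succ_domain.mpr ⟨Submodule.mem_top, h⟩⟩

theorem exists_pPow_succ_apply_eq_pPow_apply (hc : x ∈ (T.pPow (n + 1)).domain) :
    ∃ (h₁ : x ∈ T.domain) (h₂ : T ⟨x, h₁⟩ ∈ (T.pPow n).domain),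
      T.pPow (n + 1) ⟨x, hc⟩ = T.pPow n ⟨T ⟨x, h₁⟩, h₂⟩ := by
  induction n with
  | zero =>
    obtain ⟨hx, hTx⟩ := mem_pPow_succ_domain.mp hc
    exact ⟨hTx, Submodule.mem_top, pPow_succ_apply hx hTx hc⟩
  | succ n ih =>
    obtain ⟨hx, hTx⟩ := mem_pPow_succ_domain.mp hc
    obtain ⟨h₁, h₂, hval⟩ := ih hx
    have h₂' : T ⟨x, h₁⟩ ∈ (T.pPow (n + 1)).domain :=
      mem_pPow_succ_domain.mpr ⟨h₂, hval ▸ hTx⟩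
    refine ⟨h₁, h₂', ?_⟩
    rw [pPow_succ_apply hx hTx hc, pPow_succ_apply h₂ (hval ▸ hTx) h₂']
    exact congrArg T (Subtype.ext hval)

theorem mem_pPow_succ_domain_of_apply_mem (h₁ : x ∈ T.domain)
    (h₂ : T ⟨x, h₁⟩ ∈ (T.pPow n).domain) : x ∈ (T.pPow (n + 1)).domain := by
  induction n with
  | zero => exact mem_pPow_succ_domain.mpr ⟨Submodule.mem_top, h₁⟩
  | succ n ih =>
    obtain ⟨h₂', hT₂⟩ := mem_pPow_succ_domain.mp h₂
    have hx : x ∈ (T.pPow (n + 1)).domain := ih h₂'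
    obtain ⟨_, _, hval⟩ := exists_pPow_succ_apply_eq_pPow_apply hx
    exact mem_pPow_succ_domain.mpr ⟨hx, hval ▸ hT₂⟩

open Classical in
/-- `T^i x`, extended by `0` outside `D(T^i)`, so that `p(T) x` is a plain sum over `i`. -/
noncomputable def pPowApply (T : H →ₗ.[ℂ] H) (i : ℕ) (x : H) : H :=
  if h : x ∈ (T.pPow i).domain then T.pPow i ⟨x, h⟩ else 0

theorem pPowApply_of_mem (h : x ∈ (T.pPow n).domain) : T.pPowApply n x = T.pPow n ⟨x, h⟩ :=
  dif_pos h

theorem pPowApply_mem_domain (h : x ∈ (T.pPow (n + 1)).domain) : T.pPowApply n x ∈ T.domain := by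
  obtain ⟨hx, hTx⟩ := mem_pPow_succ_domain.mp h
  rwa [pPowApply_of_mem hx]

theorem apply_pPowApply (h : x ∈ (T.pPow (n + 1)).domain) (hT : T.pPowApply n x ∈ T.domain) :
    T ⟨T.pPowApply n x, hT⟩ = T.pPowApply (n + 1) x := by
  obtain ⟨hx, hTx⟩ := mem_pPow_succ_domain.mp h
  rw [pPowApply_of_mem h, pPow_succ_apply hx hTx h]
  exact congrArg T (Subtype.ext (pPowApply_of_mem hx))

theorem pPowApply_apply (h₁ : x ∈ T.domain) (h₂ : T ⟨x, h₁⟩ ∈ (T.pPow n).domain) :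
    T.pPowApply n (T ⟨x, h₁⟩) = T.pPowApply (n + 1) x := by
  have hx := mem_pPow_succ_domain_of_apply_mem h₁ h₂
  obtain ⟨_, _, hval⟩ := exists_pPow_succ_apply_eq_pPow_apply hx
  rw [pPowApply_of_mem h₂, pPowApply_of_mem hx, hval]

theorem polyApp_apply (p : Polynomial ℂ) (hx : x ∈ (polyApp p T).domain) :
    polyApp p T ⟨x, hx⟩ = ∑ i ∈ Finset.range (p.natDegree + 1), p.coeff i • T.pPowApply i x := by
  rw [← Finset.sum_attach]
  simp only [← toFun_eq_coe, polyApp, LinearMap.sum_apply, LinearMap.smul_apply]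
  refine Finset.sum_congr rfl fun i _ => ?_
  rw [pPowApply_of_mem]
  rfl

theorem apply_sum_smul_pPowApply (s : Finset ℕ) (c : ℕ → ℂ)
    (hs : ∀ i ∈ s, x ∈ (T.pPow (i + 1)).domain) (h : ∑ i ∈ s, c i • T.pPowApply i x ∈ T.domain) :
    T ⟨∑ i ∈ s, c i • T.pPowApply i x, h⟩ = ∑ i ∈ s, c i • T.pPowApply (i + 1) x := by
  let v : s → T.domain := fun i => c i • ⟨T.pPowApply i x, pPowApply_mem_domain (hs i i.2)⟩
  have hv : (⟨∑ i ∈ s, c i • T.pPowApply i x, h⟩ : T.domain) = ∑ i ∈ s.attach, v i := by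
    ext
    simp only [Submodule.coe_sum, v, Submodule.coe_smul]
    exact (Finset.sum_attach s _).symm
  rw [hv, ← toFun_eq_coe, map_sum, ← Finset.sum_attach s]
  refine Finset.sum_congr rfl fun i _ => ?_
  rw [_root_.map_smul, toFun_eq_coe, apply_pPowApply (hs i i.2)]

end Powers

section Polynomial

variable {H : Type*} [NormedAddCommGroup H] [NormedSpace ℂ H] {T : H →ₗ.[ℂ] H} {p : Polynomial ℂ}
  {x : H}

theorem mem_pPow_succ_domain_of_polyApp_apply_mem (hn : p.natDegree ≠ 0)
    (hx : x ∈ (polyApp p T).domain) (hpx : polyApp p T ⟨x, hx⟩ ∈ T.domain) :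
    x ∈ (T.pPow (p.natDegree + 1)).domain := by
  have hlow : ∀ i ∈ Finset.range p.natDegree, p.coeff i • T.pPowApply i x ∈ T.domain :=
    fun i hi => T.domain.smul_mem _ (pPowApply_mem_domain (T.pPow_domain_le
      (Finset.mem_range.mp hi) hx))
  have htop : p.coeff p.natDegree • T.pPowApply p.natDegree x ∈ T.domain := by
    have h := sub_mem hpx (T.domain.sum_mem hlow)
    rwa [polyApp_apply, Finset.sum_range_succ, add_sub_cancel_left] at h
  have hlead : p.coeff p.natDegree ≠ 0 :=
    Polynomial.leadingCoeff_ne_zero.mpr (by rintro rfl; exact hn Polynomial.natDegree_zero)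
  have hx' : x ∈ (T.pPow p.natDegree).domain := hx
  refine mem_pPow_succ_domain.mpr ⟨hx', ?_⟩
  rw [← pPowApply_of_mem hx']
  exact (T.domain.smul_mem_iff hlead).mp htop

theorem apply_polyApp_apply (hx : x ∈ (polyApp p T).domain)
    (hpx : polyApp p T ⟨x, hx⟩ ∈ T.domain) (h₁ : x ∈ T.domain)
    (h₂ : T ⟨x, h₁⟩ ∈ (polyApp p T).domain) :
    T ⟨polyApp p T ⟨x, hx⟩, hpx⟩ = polyApp p T ⟨T ⟨x, h₁⟩, h₂⟩ := by
  have hx' : x ∈ (T.pPow (p.natDegree + 1)).domain := mem_pPow_succ_domain_of_apply_mem h₁ h₂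
  have hs : ∀ i ∈ Finset.range (p.natDegree + 1), x ∈ (T.pPow (i + 1)).domain := fun i hi =>
    T.pPow_domain_le (Finset.mem_range.mp hi) hx'
  calc T ⟨polyApp p T ⟨x, hx⟩, hpx⟩
      = T ⟨∑ i ∈ Finset.range (p.natDegree + 1), p.coeff i • T.pPowApply i x,
          polyApp_apply p hx ▸ hpx⟩ := congrArg T (Subtype.ext (polyApp_apply p hx))
    _ = ∑ i ∈ Finset.range (p.natDegree + 1), p.coeff i • T.pPowApply (i + 1) x :=
      apply_sum_smul_pPowApply _ _ hs _
    _ = polyApp p T ⟨T ⟨x, h₁⟩, h₂⟩ := by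
      rw [polyApp_apply]
      refine Finset.sum_congr rfl fun i hi => ?_
      rw [pPowApply_apply h₁ (T.pPow_domain_le (Finset.mem_range_succ_iff.mp hi) h₂)]

end Polynomial

section Resolvent

variable {H : Type*} [NormedAddCommGroup H] [NormedSpace ℂ H] {T : H →ₗ.[ℂ] H} {p : Polynomial ℂ}
  {μ : ℂ} {B : H →L[ℂ] H}

theorem subConst_apply (A : H →ₗ.[ℂ] H) (μ : ℂ) {x : H} (hx : x ∈ A.domain) :
    A.subConst μ ⟨x, hx⟩ = A ⟨x, hx⟩ - μ • x :=
  rfl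

theorem resolvent_mem_pPow_succ_domain (hn : p.natDegree ≠ 0)
    (hB : ∀ y, ∃ hy : B y ∈ (polyApp p T).domain, (polyApp p T).subConst μ ⟨B y, hy⟩ = y)
    {x : H} (hx : x ∈ T.domain) : B x ∈ (T.pPow (p.natDegree + 1)).domain := by
  obtain ⟨hu, hBx⟩ := hB x
  rw [subConst_apply] at hBx
  have hu₁ : B x ∈ T.domain := pPow_one_domain (T := T) ▸
    T.pPow_domain_le (Nat.one_le_iff_ne_zero.mpr hn) hu
  refine mem_pPow_succ_domain_of_polyApp_apply_mem hn hu ?_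
  rw [eq_add_of_sub_eq hBx]
  exact add_mem hx (T.domain.smul_mem μ hu₁)

theorem exists_apply_resolvent_eq_resolvent_apply (hn : p.natDegree ≠ 0)
    (hB : ∀ y, ∃ hy : B y ∈ (polyApp p T).domain, (polyApp p T).subConst μ ⟨B y, hy⟩ = y)
    (hB' : ∀ x : (polyApp p T).domain, B ((polyApp p T).subConst μ x) = x)
    {x : H} (hx : x ∈ T.domain) : ∃ h : B x ∈ T.domain, T ⟨B x, h⟩ = B (T ⟨x, hx⟩) := by
  obtain ⟨hu, hBx⟩ := hB x
  rw [subConst_apply] at hBx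
  obtain ⟨h₁, h₂, -⟩ := exists_pPow_succ_apply_eq_pPow_apply
    (resolvent_mem_pPow_succ_domain hn hB hx)
  refine ⟨h₁, ?_⟩
  have hpu : polyApp p T ⟨B x, hu⟩ ∈ T.domain := by
    rw [eq_add_of_sub_eq hBx]
    exact add_mem hx (T.domain.smul_mem μ h₁)
  have hTx : T ⟨x, hx⟩ = T ⟨polyApp p T ⟨B x, hu⟩, hpu⟩ - μ • T ⟨B x, h₁⟩ := by
    rw [← T.map_smul, ← T.map_sub]
    exact congrArg T (Subtype.ext hBx.symm)
  have h₂' : T ⟨B x, h₁⟩ ∈ (polyApp p T).domain := h₂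
  calc T ⟨B x, h₁⟩ = B ((polyApp p T).subConst μ ⟨T ⟨B x, h₁⟩, h₂'⟩) := (hB' ⟨_, h₂'⟩).symm
    _ = B (T ⟨x, hx⟩) := by rw [subConst_apply, hTx, apply_polyApp_apply hu hpu h₁ h₂']

theorem pPowApply_resolvent_apply (hn : p.natDegree ≠ 0)
    (hB : ∀ y, ∃ hy : B y ∈ (polyApp p T).domain, (polyApp p T).subConst μ ⟨B y, hy⟩ = y)
    (hB' : ∀ x : (polyApp p T).domain, B ((polyApp p T).subConst μ x) = x)
    {j : ℕ} (hj : j ≤ p.natDegree) {x : H} (hx : x ∈ T.domain) :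
    T.pPowApply j (B (T ⟨x, hx⟩)) = T.pPowApply (j + 1) (B x) := by
  obtain ⟨h₁, hcomm⟩ := exists_apply_resolvent_eq_resolvent_apply hn hB hB' hx
  rw [← hcomm]
  exact pPowApply_apply h₁ (T.pPow_domain_le hj (hcomm ▸ (hB _).1))

end Resolvent

section Closable

variable {𝕜 E F G : Type*} [NontriviallyNormedField 𝕜]
  [NormedAddCommGroup E] [NormedSpace 𝕜 E]
  [NormedAddCommGroup F] [NormedSpace 𝕜 F] [CompleteSpace F]
  [NormedAddCommGroup G] [NormedSpace 𝕜 G] [CompleteSpace G]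

open Filter Topology in
theorem IsClosable.exists_clm_eq_apply_comp {T : E →ₗ.[𝕜] F} (hT : T.IsClosable) (C : G →L[𝕜] E)
    (hC : ∀ x, C x ∈ T.domain) : ∃ D : G →L[𝕜] F, ∀ x, D x = T ⟨C x, hC x⟩ := by
  let L : G →ₗ[𝕜] F := T.toFun ∘ₗ (C : G →ₗ[𝕜] E).codRestrict T.domain hC
  refine ⟨⟨L, L.continuous_of_seq_closed_graph fun u x y hux huy => ?_⟩, fun x => rfl⟩
  have hlim : Tendsto (fun k => (C (u k), L (u k))) atTop (𝓝 (C x, y)) :=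
    ((C.continuous.tendsto x).comp hux).prodMk_nhds huy
  have hcl : (C x, y) ∈ T.closure.graph := by
    rw [← hT.graph_closure_eq_closure_graph, ← SetLike.mem_coe, Submodule.topologicalClosure_coe]
    exact mem_closure_of_tendsto hlim (Eventually.of_forall fun k => T.mem_graph ⟨C (u k), hC _⟩)
  exact T.closure.mem_graph_snd_inj hcl (le_graph_of_le T.le_closure (T.mem_graph ⟨C x, hC x⟩)) rfl

end Closable

section Adjoint

variable {𝕜 E F G : Type*} [RCLike 𝕜]
  [NormedAddCommGroup E] [InnerProductSpace 𝕜 E] [CompleteSpace E]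
  [NormedAddCommGroup F] [InnerProductSpace 𝕜 F] [CompleteSpace F]
  [NormedAddCommGroup G] [InnerProductSpace 𝕜 G] [CompleteSpace G]

theorem exists_adjoint_apply_eq_of_comp {T : E →ₗ.[𝕜] F} (hT : Dense (T.domain : Set E))
    {C : F →L[𝕜] G} {D : E →L[𝕜] G} (h : ∀ x : T.domain, C (T x) = D x) (u : G) :
    ∃ hu : C.adjoint u ∈ T.adjoint.domain, T.adjoint ⟨C.adjoint u, hu⟩ = D.adjoint u := by
  have key : ∀ x : T.domain, inner 𝕜 (D.adjoint u) (x : E) = inner 𝕜 (C.adjoint u) (T x) :=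
    fun x => by rw [ContinuousLinearMap.adjoint_inner_left, ContinuousLinearMap.adjoint_inner_left, h]
  exact ⟨mem_adjoint_domain_of_exists _ ⟨_, key⟩, adjoint_apply_eq hT _ key⟩

end Adjoint

section PolynomialAdjoint

variable {H : Type*} [NormedAddCommGroup H] [InnerProductSpace ℂ H] [CompleteSpace H]
  {T : H →ₗ.[ℂ] H}

open scoped ComplexConjugate

theorem inner_adjoint_pPow_apply (hT : Dense (T.domain : Set H)) {k : ℕ} {y x : H}
    (hy : y ∈ (T.adjoint.pPow k).domain) (hx : x ∈ (T.pPow k).domain) :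
    inner ℂ (T.adjoint.pPow k ⟨y, hy⟩) x = inner ℂ y (T.pPow k ⟨x, hx⟩) := by
  induction k generalizing x with
  | zero => rfl
  | succ k ih =>
    obtain ⟨hyk, hTyk⟩ := mem_pPow_succ_domain.mp hy
    obtain ⟨h₁, h₂, hval⟩ := exists_pPow_succ_apply_eq_pPow_apply hx
    rw [pPow_succ_apply hyk hTyk hy, hval,
      adjoint_isFormalAdjoint hT ⟨_, hTyk⟩ ⟨x, h₁⟩, ih hyk h₂]

theorem polyApp_isFormalAdjoint (hT : Dense (T.domain : Set H)) (p : Polynomial ℂ) :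
    (polyApp p T).IsFormalAdjoint (polyApp (p.map (starRingEnd ℂ)) T.adjoint) := by
  rintro ⟨x, hx⟩ ⟨y, hy⟩
  have hy' : y ∈ (T.adjoint.pPow p.natDegree).domain := p.natDegree_map (starRingEnd ℂ) ▸ hy
  rw [polyApp_apply, polyApp_apply, sum_inner, inner_sum, p.natDegree_map]
  refine Finset.sum_congr rfl fun i hi => ?_
  have hi : i ≤ p.natDegree := Finset.mem_range_succ_iff.mp hi
  have hxi := T.pPow_domain_le hi hx
  have hyi := T.adjoint.pPow_domain_le hi hy'
  rw [Polynomial.coeff_map, inner_smul_left, inner_smul_right, pPowApply_of_mem hxi,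
    pPowApply_of_mem hyi, ← inner_conj_symm, ← inner_adjoint_pPow_apply hT hyi hxi,
    inner_conj_symm]

theorem eq_resolvent_adjoint_apply {A : H →ₗ.[ℂ] H} (hA : Dense (A.domain : Set H)) {μ : ℂ}
    {B : H →L[ℂ] H} (hB : ∀ y, ∃ hy : B y ∈ A.domain, A.subConst μ ⟨B y, hy⟩ = y)
    {v : H} (hv : v ∈ A.adjoint.domain) : v = B.adjoint (A.adjoint ⟨v, hv⟩ - conj μ • v) := by
  refine (ext_inner_right ℂ fun x => ?_).symm
  obtain ⟨hx, hBx⟩ := hB x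
  rw [ContinuousLinearMap.adjoint_inner_left, inner_sub_left, inner_smul_left,
    adjoint_isFormalAdjoint hA ⟨v, hv⟩ ⟨B x, hx⟩, starRingEnd_self_apply, ← inner_smul_right,
    ← inner_sub_right, ← subConst_apply, hBx]

variable {p : Polynomial ℂ} {μ : ℂ} {B : H →L[ℂ] H}

theorem exists_adjoint_pPow_resolvent_adjoint (hT : Dense (T.domain : Set H))
    (hT' : T.IsClosable) (hn : p.natDegree ≠ 0)
    (hB : ∀ y, ∃ hy : B y ∈ (polyApp p T).domain, (polyApp p T).subConst μ ⟨B y, hy⟩ = y)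
    (hB' : ∀ x : (polyApp p T).domain, B ((polyApp p T).subConst μ x) = x)
    {j : ℕ} (hj : j ≤ p.natDegree) :
    ∃ C : H →L[ℂ] H, (∀ x, C x = T.pPowApply j (B x)) ∧
      ∀ u, ∃ hu : B.adjoint u ∈ (T.adjoint.pPow j).domain,
        T.adjoint.pPow j ⟨B.adjoint u, hu⟩ = C.adjoint u := by
  induction j with
  | zero => exact ⟨B, fun x => (pPowApply_of_mem (n := 0) (x := B x) Submodule.mem_top).symm,
      fun u => ⟨Submodule.mem_top, rfl⟩⟩
  | succ j ih =>
    obtain ⟨C, hC, hCadj⟩ := ih (Nat.le_of_succ_le hj)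
    have hCT : ∀ x, C x ∈ T.domain := fun x =>
      hC x ▸ pPowApply_mem_domain (T.pPow_domain_le hj (hB x).1)
    obtain ⟨D, hD⟩ := hT'.exists_clm_eq_apply_comp C hCT
    have hD' : ∀ x, D x = T.pPowApply (j + 1) (B x) := fun x => by
      rw [hD, ← apply_pPowApply (T.pPow_domain_le hj (hB x).1) (hC x ▸ hCT x)]
      exact congrArg T (Subtype.ext (hC x))
    refine ⟨D, hD', fun u => ?_⟩
    have hCD : ∀ x : T.domain, C (T x) = D x := fun x => by
      rw [hC, hD', pPowApply_resolvent_apply hn hB hB' (Nat.le_of_succ_le hj) x.2]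
    obtain ⟨hu, hval⟩ := hCadj u
    obtain ⟨hCu, hTCu⟩ := exists_adjoint_apply_eq_of_comp hT hCD u
    have hTu : T.adjoint.pPow j ⟨B.adjoint u, hu⟩ ∈ T.adjoint.domain := hval ▸ hCu
    refine ⟨mem_pPow_succ_domain.mpr ⟨hu, hTu⟩, ?_⟩
    rw [pPow_succ_apply hu hTu, ← hTCu]
    exact congrArg T.adjoint (Subtype.ext hval)

end PolynomialAdjoint

end LinearPMap

/-- if `T` is closable, `T^n` is densely defined, `p` has degree `n`, and
`σ(p(T)) ≠ ℂ`, then `(p(T))* = p̄(T*)`. -/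
theorem statement_0 {H : Type*} [NormedAddCommGroup H] [InnerProductSpace ℂ H] [CompleteSpace H]
    (T : H →ₗ.[ℂ] H) (hdense : Dense (T.domain : Set H)) (hclosable : T.IsClosable)
    (p : Polynomial ℂ) (n : ℕ) (hdeg : p.natDegree = n)
    (hTn : Dense ((T.pPow n).domain : Set H))
    (hspec : (LinearPMap.polyApp p T).pSpectrum ≠ Set.univ) :
    (LinearPMap.polyApp p T).adjoint =
      LinearPMap.polyApp (p.map (starRingEnd ℂ)) T.adjoint := by
  subst hdeg
  have hA : Dense ((polyApp p T).domain : Set H) := hTn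
  have hle := (polyApp_isFormalAdjoint hdense p).le_adjoint hA
  refine (eq_of_le_of_domain_eq hle (le_antisymm hle.1 fun v hv => ?_)).symm
  change v ∈ (T.adjoint.pPow (p.map (starRingEnd ℂ)).natDegree).domain
  rw [p.natDegree_map]
  rcases eq_or_ne p.natDegree 0 with hn | hn
  · rw [hn]
    exact Submodule.mem_top
  obtain ⟨μ, hμ⟩ := Set.ne_univ_iff_exists_notMem _ |>.mp hspec
  obtain ⟨B, hB, hB'⟩ := not_not.mp hμ
  obtain ⟨_, _, hadj⟩ := exists_adjoint_pPow_resolvent_adjoint hdense hclosable hn hB hB' le_rfl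
  rw [eq_resolvent_adjoint_apply hA hB hv]
  exact (hadj _).1
end

section
/- Let A and B be unbounded normal operators on a Hilbert space such that σ(AB) ≠ ℂ and σ(BA) ≠ ℂ. Then σ(AB) = σ(BA). -/
open LinearPMap

set_option linter.unusedSectionVars false

/-!
For `ν ≠ 0` the formal identity `(BA - ν)⁻¹ = ν⁻¹ (B (AB - ν)⁻¹ A - 1)` makes sense on `dom A`
only; composing it with the resolvent `S = (BA - μ)⁻¹`, which maps into `dom A`, through the
resolvent identity gives an everywhere defined inverse of `BA - ν` built from `S` and the operators
`B (AB - ν)⁻¹` and `A S`, which are bounded by the closed graph theorem. Injectivity of `BA - ν`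
is inherited from `AB - ν`.

For `ν = 0`, invertibility of `AB` makes `A` surjective, hence injective since a normal operator
has `ker A = ker A* = (ran A)ᗮ`. Then `A⁻¹ = B (AB)⁻¹` and, using `μ ∉ σ(BA)`,
`B⁻¹ = A S - μ (AB)⁻¹ A S` are bounded, so `(BA)⁻¹ = A⁻¹ B⁻¹`.
-/
namespace LinearPMap

theorem IsClosed.exists_clm_mem_graph {𝕜 E F G : Type*} [NontriviallyNormedField 𝕜]
    [NormedAddCommGroup E] [NormedSpace 𝕜 E] [CompleteSpace E]
    [NormedAddCommGroup F] [NormedSpace 𝕜 F]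
    [NormedAddCommGroup G] [NormedSpace 𝕜 G] [CompleteSpace G]
    {T : F →ₗ.[𝕜] G} (hT : T.IsClosed) (R : E →L[𝕜] F) (hR : ∀ y, R y ∈ T.domain) :
    ∃ K : E →L[𝕜] G, ∀ y, (R y, K y) ∈ T.graph := by
  let L : E →ₗ[𝕜] G := T.toFun ∘ₗ (R : E →ₗ[𝕜] F).codRestrict T.domain hR
  have hL : ∀ y, (R y, L y) ∈ T.graph := fun y => T.mem_graph ⟨R y, hR y⟩
  have hgraph : (L.graph : Set (E × G)) = (fun p => (R p.1, p.2)) ⁻¹' T.graph := by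
    ext ⟨y, z⟩
    simp only [SetLike.mem_coe, LinearMap.mem_graph_iff, Set.mem_preimage]
    exact ⟨fun h => h ▸ hL y, fun h => T.mem_graph_snd_inj h (hL y) rfl⟩
  have hclosed : _root_.IsClosed (L.graph : Set (E × G)) :=
    hgraph ▸ hT.preimage ((R.continuous.comp continuous_fst).prodMk continuous_snd)
  exact ⟨.ofIsClosedGraph hclosed, hL⟩

section Banach

variable {H : Type*} [NormedAddCommGroup H] [NormedSpace ℂ H] {A B : H →ₗ.[ℂ] H}

theorem pComp_apply_mk {g f : H →ₗ.[ℂ] H} (v : f.domain) (hv : f v ∈ g.domain) :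
    (g.pComp f) ⟨v, v, hv, rfl⟩ = g ⟨f v, hv⟩ := by
  have hsymm : (Submodule.equivMapOfInjective f.domain.subtype (Submodule.injective_subtype _)
      (g.domain.comap f.toFun)).symm ⟨v, v, hv, rfl⟩ = ⟨v, hv⟩ := by
    rw [LinearEquiv.symm_apply_eq]
    rfl
  exact congrArg (fun z : g.domain.comap f.toFun => g ⟨f.toFun z.1, z.2⟩) hsymm

theorem mem_graph_pComp_iff {g f : H →ₗ.[ℂ] H} {x z : H} :
    (x, z) ∈ (g.pComp f).graph ↔ ∃ y, (x, y) ∈ f.graph ∧ (y, z) ∈ g.graph := by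
  simp only [mem_graph_iff]
  constructor
  · rintro ⟨⟨w, v, hv, rfl⟩, rfl, rfl⟩
    exact ⟨f v, ⟨v, rfl, rfl⟩, ⟨⟨f v, hv⟩, rfl, (pComp_apply_mk v hv).symm⟩⟩
  · rintro ⟨y, ⟨v, rfl, rfl⟩, ⟨u, hu, rfl⟩⟩
    have hv : f v ∈ g.domain := hu ▸ u.2
    refine ⟨⟨v, v, hv, rfl⟩, rfl, ?_⟩
    rw [pComp_apply_mk v hv]
    congr 1
    exact Subtype.ext hu.symm

theorem fst_mem_domain_of_mem_graph_pComp {x z : H} (h : (x, z) ∈ (B.pComp A).graph) :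
    x ∈ A.domain :=
  have ⟨_, hA, _⟩ := mem_graph_pComp_iff.mp h
  mem_domain_of_mem_graph hA

theorem mem_graph_subConst_iff {T : H →ₗ.[ℂ] H} {μ : ℂ} {x y : H} :
    (x, y) ∈ (T.subConst μ).graph ↔ (x, y + μ • x) ∈ T.graph := by
  simp only [mem_graph_iff]
  constructor
  · rintro ⟨w, rfl, rfl⟩
    exact ⟨w, rfl, (sub_add_cancel _ _).symm⟩
  · rintro ⟨w, rfl, hw⟩
    exact ⟨w, rfl, (eq_sub_of_add_eq hw.symm).symm⟩

theorem isBddInvertible_iff {T : H →ₗ.[ℂ] H} :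
    T.IsBddInvertible ↔
      ∃ N : H →L[ℂ] H, (∀ y, (N y, y) ∈ T.graph) ∧ ∀ x, (x, 0) ∈ T.graph → x = 0 := by
  constructor
  · rintro ⟨N, hright, hleft⟩
    refine ⟨N, fun y => ?_, fun x hx => ?_⟩
    · obtain ⟨hy, hTy⟩ := hright y
      exact (image_iff hy).mp hTy.symm
    · obtain ⟨w, rfl, hw⟩ := (T.mem_graph_iff).mp hx
      simpa [hw] using (hleft w).symm
  · rintro ⟨N, hright, hinj⟩
    refine ⟨N, fun y => ⟨mem_domain_of_mem_graph (hright y), ?_⟩, fun w => ?_⟩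
    · exact (T.mem_graph_snd_inj (hright y) (T.mem_graph _) rfl).symm
    · have h := T.graph.sub_mem (T.mem_graph w) (hright (T w))
      rw [Prod.mk_sub_mk, sub_self] at h
      exact (sub_eq_zero.mp (hinj _ h)).symm

theorem notMem_pSpectrum_iff {T : H →ₗ.[ℂ] H} {μ : ℂ} :
    μ ∉ T.pSpectrum ↔
      ∃ N : H →L[ℂ] H, (∀ y, (N y, y + μ • N y) ∈ T.graph) ∧
        ∀ x, (x, μ • x) ∈ T.graph → x = 0 := by
  simp only [pSpectrum, Set.mem_ofPred_eq, not_not, isBddInvertible_iff, mem_graph_subConst_iff,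
    zero_add]

theorem zero_notMem_pSpectrum_iff {T : H →ₗ.[ℂ] H} : 0 ∉ T.pSpectrum ↔ T.IsBddInvertible := by
  simp only [notMem_pSpectrum_iff, isBddInvertible_iff, zero_smul, add_zero]

theorem isBddInvertible_pComp (hA : A.IsBddInvertible) (hB : B.IsBddInvertible) :
    (B.pComp A).IsBddInvertible := by
  obtain ⟨NA, hNA, hAinj⟩ := isBddInvertible_iff.mp hA
  obtain ⟨NB, hNB, hBinj⟩ := isBddInvertible_iff.mp hB
  refine isBddInvertible_iff.mpr ⟨NA ∘L NB, fun y => ?_, fun x hx => ?_⟩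
  · exact mem_graph_pComp_iff.mpr ⟨NB y, hNA _, hNB y⟩
  · obtain ⟨u, hxu, hu⟩ := mem_graph_pComp_iff.mp hx
    obtain rfl := hBinj u hu
    exact hAinj x hxu

theorem eq_zero_of_mem_graph_pComp_swap {ν : ℂ} (hν : ν ≠ 0)
    (hAB : ∀ x, (x, ν • x) ∈ (A.pComp B).graph → x = 0) {x : H}
    (hx : (x, ν • x) ∈ (B.pComp A).graph) : x = 0 := by
  obtain ⟨u, hxu, huν⟩ := mem_graph_pComp_iff.mp hx
  obtain rfl : u = 0 := hAB u (mem_graph_pComp_iff.mpr ⟨ν • x, huν, A.graph.smul_mem ν hxu⟩)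
  exact (smul_eq_zero.mp (B.graph_fst_eq_zero_snd huν rfl)).resolve_left hν

/-- On `dom A` the resolvent of `BA` is `ν⁻¹ (B (AB - ν)⁻¹ A - 1)`. -/
theorem mem_graph_pComp_swap_of_mem_graph {ν : ℂ} (hν : ν ≠ 0) {R K : H →L[ℂ] H}
    (hR : ∀ y, (R y, y + ν • R y) ∈ (A.pComp B).graph) (hK : ∀ y, (R y, K y) ∈ B.graph)
    {z a : H} (hza : (z, a) ∈ A.graph) : (ν⁻¹ • (K a - z), K a) ∈ (B.pComp A).graph := by
  obtain ⟨v, hv, hva⟩ := mem_graph_pComp_iff.mp (hR a)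
  obtain rfl : v = K a := B.mem_graph_snd_inj hv (hK a) rfl
  have hw : (ν⁻¹ • (K a - z), R a) ∈ A.graph := by
    convert A.graph.smul_mem ν⁻¹ (A.graph.sub_mem hva hza) using 1
    rw [Prod.mk_sub_mk, Prod.smul_mk, add_sub_cancel_left, smul_smul, inv_mul_cancel₀ hν,
      one_smul]
  exact mem_graph_pComp_iff.mpr ⟨R a, hw, hK a⟩

variable [CompleteSpace H]

theorem notMem_pSpectrum_pComp_swap_of_ne_zero (hA : A.IsClosed) (hB : B.IsClosed) {ν μ : ℂ}
    (hν : ν ≠ 0) (hνAB : ν ∉ (A.pComp B).pSpectrum) (hμBA : μ ∉ (B.pComp A).pSpectrum) :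
    ν ∉ (B.pComp A).pSpectrum := by
  obtain ⟨R, hR, hABinj⟩ := notMem_pSpectrum_iff.mp hνAB
  obtain ⟨S, hS, -⟩ := notMem_pSpectrum_iff.mp hμBA
  obtain ⟨K, hK⟩ := hB.exists_clm_mem_graph R fun y => fst_mem_domain_of_mem_graph_pComp (hR y)
  obtain ⟨K', hK'⟩ := hA.exists_clm_mem_graph S fun y => fst_mem_domain_of_mem_graph_pComp (hS y)
  -- Resolvent identity `(BA - ν)⁻¹ = S + (ν - μ) (BA - ν)⁻¹ S`; `S` maps into `dom A`, where
  -- `mem_graph_pComp_swap_of_mem_graph` gives `(BA - ν)⁻¹` in terms of `K = B R`, `K' = A S`.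
  refine notMem_pSpectrum_iff.mpr ⟨S + ((ν - μ) * ν⁻¹) • (K ∘L K' - S), fun y => ?_,
    fun x => eq_zero_of_mem_graph_pComp_swap hν hABinj⟩
  convert (B.pComp A).graph.add_mem (hS y) ((B.pComp A).graph.smul_mem (ν - μ)
    (mem_graph_pComp_swap_of_mem_graph hν hR hK (hK' y))) using 1
  simp only [_root_.add_apply, _root_.smul_apply, _root_.sub_apply,
    ContinuousLinearMap.comp_apply, Prod.smul_mk, Prod.mk_add_mk, Prod.mk.injEq]
  refine ⟨by rw [smul_smul], ?_⟩
  match_scalars <;> field_simp; ring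

theorem isBddInvertible_of_pComp_of_notMem_pSpectrum (hA : A.IsClosed)
    (hAinj : ∀ x, (x, 0) ∈ A.graph → x = 0) (hAB : (A.pComp B).IsBddInvertible) {μ : ℂ}
    (hμBA : μ ∉ (B.pComp A).pSpectrum) : B.IsBddInvertible := by
  obtain ⟨R, hR, hABinj⟩ := isBddInvertible_iff.mp hAB
  obtain ⟨S, hS, -⟩ := notMem_pSpectrum_iff.mp hμBA
  obtain ⟨K', hK'⟩ := hA.exists_clm_mem_graph S fun y => fst_mem_domain_of_mem_graph_pComp (hS y)
  have hBR : ∀ z a, (z, a) ∈ A.graph → (R a, z) ∈ B.graph := by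
    intro z a hza
    obtain ⟨v, hv, hva⟩ := mem_graph_pComp_iff.mp (hR a)
    have hvz := A.graph.sub_mem hva hza
    rw [Prod.mk_sub_mk, sub_self] at hvz
    rwa [sub_eq_zero.mp (hAinj _ hvz)] at hv
  refine isBddInvertible_iff.mpr ⟨K' - μ • R ∘L K', fun y => ?_,
    fun x hx => hABinj x (mem_graph_pComp_iff.mpr ⟨0, hx, A.graph.zero_mem⟩)⟩
  obtain ⟨v, hv, hvy⟩ := mem_graph_pComp_iff.mp (hS y)
  obtain rfl : v = K' y := A.mem_graph_snd_inj hv (hK' y) rfl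
  convert B.graph.sub_mem hvy (B.graph.smul_mem μ (hBR _ _ hv)) using 1
  simp

end Banach

section Hilbert

variable {H : Type*} [NormedAddCommGroup H] [InnerProductSpace ℂ H] [CompleteSpace H]
  {A B : H →ₗ.[ℂ] H}

theorem eq_zero_of_mem_adjoint_graph (hd : Dense (A.domain : Set H))
    (hsurj : ∀ y, ∃ x, (x, y) ∈ A.graph) {x : H} (hx : (x, 0) ∈ A.adjoint.graph) : x = 0 := by
  rw [adjoint_graph_eq_graph_adjoint hd, Submodule.mem_adjoint_iff] at hx
  obtain ⟨a, ha⟩ := hsurj x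
  simpa using hx a x ha

theorem IsNormal.mem_adjoint_graph_of_mem_graph (hA : A.IsNormal) {x : H}
    (hx : (x, 0) ∈ A.graph) : (x, 0) ∈ A.adjoint.graph := by
  have hx' : (x, 0) ∈ (A.adjoint.pComp A).graph :=
    mem_graph_pComp_iff.mpr ⟨0, hx, A.adjoint.graph.zero_mem⟩
  rw [hA.2.2, mem_graph_pComp_iff] at hx'
  obtain ⟨u, hxu, hu⟩ := hx'
  rw [adjoint_graph_eq_graph_adjoint hA.2.1] at hxu ⊢
  obtain rfl : u = 0 := by simpa using (Submodule.mem_adjoint_iff _ _).mp hxu u 0 hu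
  exact hxu

theorem IsNormal.isBddInvertible_of_pComp (hA : A.IsNormal) (hB : B.IsClosed)
    (hAB : (A.pComp B).IsBddInvertible) : A.IsBddInvertible := by
  obtain ⟨R, hR, -⟩ := isBddInvertible_iff.mp hAB
  obtain ⟨K, hK⟩ := hB.exists_clm_mem_graph R fun y => fst_mem_domain_of_mem_graph_pComp (hR y)
  have hAK : ∀ y, (K y, y) ∈ A.graph := fun y => by
    obtain ⟨v, hv, hvy⟩ := mem_graph_pComp_iff.mp (hR y)
    rwa [B.mem_graph_snd_inj hv (hK y) rfl] at hvy
  exact isBddInvertible_iff.mpr ⟨K, hAK, fun x hx => eq_zero_of_mem_adjoint_graph hA.2.1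
    (fun y => ⟨K y, hAK y⟩) (hA.mem_adjoint_graph_of_mem_graph hx)⟩

theorem zero_notMem_pSpectrum_pComp_swap (hA : A.IsNormal) (hB : B.IsClosed) {μ : ℂ}
    (h0AB : 0 ∉ (A.pComp B).pSpectrum) (hμBA : μ ∉ (B.pComp A).pSpectrum) :
    0 ∉ (B.pComp A).pSpectrum := by
  rw [zero_notMem_pSpectrum_iff] at h0AB ⊢
  have hAinv := hA.isBddInvertible_of_pComp hB h0AB
  obtain ⟨-, -, hAinj⟩ := isBddInvertible_iff.mp hAinv
  exact isBddInvertible_pComp hAinv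
    (isBddInvertible_of_pComp_of_notMem_pSpectrum hA.1 hAinj h0AB hμBA)

theorem pSpectrum_pComp_swap_subset (hA : A.IsNormal) (hB : B.IsClosed)
    (hBA : (B.pComp A).pSpectrum ≠ Set.univ) :
    (B.pComp A).pSpectrum ⊆ (A.pComp B).pSpectrum := by
  obtain ⟨μ, hμ⟩ := (Set.ne_univ_iff_exists_notMem _).mp hBA
  intro ν hνBA
  by_contra hνAB
  rcases eq_or_ne ν 0 with rfl | hν
  · exact zero_notMem_pSpectrum_pComp_swap hA hB hνAB hμ hνBA
  · exact notMem_pSpectrum_pComp_swap_of_ne_zero hA.1 hB hν hνAB hμ hνBA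

end Hilbert

end LinearPMap

theorem statement_6_general {H : Type*} [NormedAddCommGroup H] [InnerProductSpace ℂ H] [CompleteSpace H]
    (A B : H →ₗ.[ℂ] H)
    (hnA : A.IsNormal) (hnB : B.IsNormal)
    (hsAB : (A.pComp B).pSpectrum ≠ Set.univ) (hsBA : (B.pComp A).pSpectrum ≠ Set.univ) :
    (A.pComp B).pSpectrum = (B.pComp A).pSpectrum :=
  (pSpectrum_pComp_swap_subset hnB hnA.1 hsAB).antisymm
    (pSpectrum_pComp_swap_subset hnA hnB.1 hsBA)

/-- for normal `A`, `B` with `σ(AB) ≠ ℂ` and `σ(BA) ≠ ℂ`, one has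
`σ(AB) = σ(BA)`. -/
theorem statement_6 {H : Type*} [NormedAddCommGroup H] [InnerProductSpace ℂ H] [CompleteSpace H]
    (A B : H →ₗ.[ℂ] H)
    (hdA : Dense (A.domain : Set H)) (hdB : Dense (B.domain : Set H))
    (hnA : A.IsNormal) (hnB : B.IsNormal)
    (hsAB : (A.pComp B).pSpectrum ≠ Set.univ) (hsBA : (B.pComp A).pSpectrum ≠ Set.univ) :
    (A.pComp B).pSpectrum = (B.pComp A).pSpectrum :=
  statement_6_general A B hnA hnB hsAB hsBA
end
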